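/- arXiv:1209.6440 — 3 statements merged into one kernel-verified Lean document; each statement's English description precedes it below -/
import Mathlib

section
/- The complex solutions of the equation 2^{-s} + 4^{-s} = 1 are exactly the points s = D + i·n·p and s = −D + i·(n + 1/2)·p for n ∈ ℤ, where D = log φ / log 2 with φ = (1+√5)/2 the golden ratio and p = 2π/log 2. -/
open Complex

theorem fibonacciString_complex_dimensions (s : ℂ) :
    ((2 : ℂ) ^ (-s) + (4 : ℂ) ^ (-s) = 1 ↔
      ∃ n : ℤ,
        s = Real.log ((1 + Real.sqrt 5) / 2) / Real.log 2 +
            (n : ℂ) * (2 * Real.pi / Real.log 2) * I ∨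
        s = -(Real.log ((1 + Real.sqrt 5) / 2) / Real.log 2) +
            ((n : ℂ) + 1 / 2) * (2 * Real.pi / Real.log 2) * I) := by
  have h5 : Real.sqrt 5 ^ 2 = 5 := Real.sq_sqrt (by norm_num)
  have h5' : (1:ℝ) < Real.sqrt 5 := by nlinarith [Real.sqrt_nonneg 5]
  have h5c : ((Real.sqrt 5 : ℝ) : ℂ) ^ 2 = 5 := by norm_cast
  set φ : ℝ := (1 + Real.sqrt 5)/2 with hφdef
  have hφpos : 0 < φ := by rw [hφdef]; nlinarith
  have hLpos : 0 < Real.log 2 := Real.log_pos (by norm_num)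
  have hL : (Real.log 2 : ℂ) ≠ 0 := by
    exact_mod_cast ne_of_gt hLpos
  -- rewrite powers as exponentials
  have hlog2 : Complex.log 2 = (Real.log 2 : ℂ) := by
    rw [show (2:ℂ) = ((2:ℝ):ℂ) by norm_num, ← Complex.ofReal_log (by norm_num : (0:ℝ) ≤ 2)]
  have hlog4 : Complex.log 4 = 2 * (Real.log 2 : ℂ) := by
    rw [show ((4:ℂ)) = ((4:ℝ):ℂ) by norm_num,
      ← Complex.ofReal_log (by norm_num : (0:ℝ) ≤ 4),
      show (4:ℝ) = 2^2 by norm_num, Real.log_pow]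
    push_cast; ring
  have h2 : (2:ℂ)^(-s) = Complex.exp (-s * (Real.log 2 : ℂ)) := by
    rw [Complex.cpow_def_of_ne_zero (by norm_num), hlog2, mul_comm]
  have h4 : (4:ℂ)^(-s) = Complex.exp (-s * (Real.log 2 : ℂ)) *
      Complex.exp (-s * (Real.log 2 : ℂ)) := by
    rw [Complex.cpow_def_of_ne_zero (by norm_num), hlog4, ← Complex.exp_add]
    ring_nf
  set u : ℂ := Complex.exp (-s * (Real.log 2 : ℂ)) with hu
  -- the two roots
  set a : ℂ := ((Real.sqrt 5 : ℝ) - 1)/2 with ha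
  set b : ℂ := -(1 + (Real.sqrt 5 : ℝ))/2 with hb
  have hroots : u + u * u = 1 ↔ (u = a ∨ u = b) := by
    constructor
    · intro h
      have hf : (u - a) * (u - b) = 0 := by
        rw [ha, hb]; linear_combination h - (1/4 : ℂ) * h5c
      rcases mul_eq_zero.1 hf with h' | h'
      · exact Or.inl (sub_eq_zero.1 h')
      · exact Or.inr (sub_eq_zero.1 h')
    · rintro (h | h)
      · rw [h, ha]; linear_combination (1/4 : ℂ) * h5c
      · rw [h, hb]; linear_combination (1/4 : ℂ) * h5c
  -- exp values at the roots
  have hea : Complex.exp (-(Real.log φ : ℂ)) = a := by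
    rw [show (-(Real.log φ : ℂ)) = ((-Real.log φ : ℝ) : ℂ) by push_cast; ring,
      ← Complex.ofReal_exp, Real.exp_neg, Real.exp_log hφpos, ha, hφdef]
    rw [show ((1 + Real.sqrt 5)/2)⁻¹ = (Real.sqrt 5 - 1)/2 from
      inv_eq_of_mul_eq_one_right (by nlinarith)]
    push_cast; ring
  have heb : Complex.exp ((Real.log φ : ℂ) + Real.pi * I) = b := by
    rw [Complex.exp_add, Complex.exp_pi_mul_I, ← Complex.ofReal_exp,
      Real.exp_log hφpos, hb, hφdef]
    push_cast; ring
  rw [h2, h4, hroots, hu, ← hea, ← heb,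
    Complex.exp_eq_exp_iff_exists_int, Complex.exp_eq_exp_iff_exists_int]
  have hinv : ((Real.log 2 : ℝ) : ℂ)⁻¹ * ((Real.log 2 : ℝ) : ℂ) = 1 := inv_mul_cancel₀ hL
  constructor
  · rintro (⟨n, hn⟩ | ⟨n, hn⟩)
    · refine ⟨-n, Or.inl ?_⟩
      simp only [Int.cast_neg]
      linear_combination (-((Real.log 2 : ℝ) : ℂ)⁻¹) * hn + (-s) * hinv
    · refine ⟨-n - 1, Or.inr ?_⟩
      simp only [Int.cast_sub, Int.cast_neg, Int.cast_one]
      linear_combination (-((Real.log 2 : ℝ) : ℂ)⁻¹) * hn + (-s) * hinv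
  · rintro ⟨n, hn | hn⟩
    · refine Or.inl ⟨-n, ?_⟩
      simp only [Int.cast_neg]
      linear_combination (-((Real.log 2 : ℝ) : ℂ)) * hn +
        (-(((Real.log φ : ℝ) : ℂ) + 2 * (n : ℂ) * (Real.pi : ℂ) * I)) * hinv
    · refine Or.inr ⟨-n - 1, ?_⟩
      simp only [Int.cast_sub, Int.cast_neg, Int.cast_one]
      linear_combination (-((Real.log 2 : ℝ) : ℂ)) * hn +
        (((Real.log φ : ℝ) : ℂ) - 2 * (n : ℂ) * (Real.pi : ℂ) * I - (Real.pi : ℂ) * I) * hinv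
end

section
/- The residue of ζ(s) = 4^{-s}/(1 − 2^{-s} − 4^{-s}) at any pole of the form s = D + i·n·(2π/log 2), with D = log φ/log 2 and φ = (1+√5)/2, equals (3 − φ)/(5 log 2), independently of n ∈ ℤ. -/
/-!
Put `x = 2^(-s)`, so that `4^(-s) = x²` and `ζ(s) = x² / (1 - x - x²)`. The points
`D + 2πin / log 2` are exactly the solutions of `2^(-s) = φ⁻¹`, and `φ⁻¹` is a simple root of
`1 - x - x²`. Hence the denominator has a simple zero there, with derivative
`x log 2 (1 + 2x)`, and the residue is `x² / (x log 2 (1 + 2x)) = x / (log 2 (1 + 2x))` at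
`x = φ⁻¹`, which does not depend on `n`.
-/

open Complex Filter Topology
open scoped Real goldenRatio

theorem tendsto_sub_mul_div_of_hasDerivAt {𝕜 : Type*} [NontriviallyNormedField 𝕜]
    {f g : 𝕜 → 𝕜} {z g' : 𝕜} (hf : ContinuousAt f z) (hg : HasDerivAt g g' z)
    (hgz : g z = 0) (hg' : g' ≠ 0) :
    Tendsto (fun s => (s - z) * (f s / g s)) (𝓝[≠] z) (𝓝 (f z / g')) := by
  have hslope := (hasDerivAt_iff_tendsto_slope.mp hg).inv₀ hg'
  rw [div_eq_mul_inv]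
  refine (hf.continuousWithinAt.tendsto.mul hslope).congr fun s => ?_
  rw [slope_def_field, hgz, sub_zero, inv_div]
  ring

theorem ofReal_cpow_log_div_log_add_int_mul {a b : ℝ} (ha : 0 < a) (hb : 0 < b) (hb1 : b ≠ 1)
    (n : ℤ) :
    (b : ℂ) ^ ((Real.log a : ℂ) / Real.log b + n * (2 * Real.pi / Real.log b) * I) = a := by
  have hlogb : (Real.log b : ℂ) ≠ 0 := by
    exact_mod_cast Real.log_ne_zero_of_pos_of_ne_one hb hb1
  have hexp : ((Real.log a : ℂ) / Real.log b + n * (2 * Real.pi / Real.log b) * I) * Real.log b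
      = Real.log a + n * (2 * Real.pi * I) := by
    field_simp
  rw [cpow_def_of_ne_zero (by exact_mod_cast hb.ne'), ← ofReal_log hb.le, mul_comm, hexp,
    exp_add, exp_int_mul_two_pi_mul_I, mul_one, ← ofReal_exp, Real.exp_log ha]

theorem four_cpow_eq_two_cpow_sq (s : ℂ) : (4 : ℂ) ^ s = ((2 : ℂ) ^ s) ^ 2 := by
  have h := mul_cpow_ofReal_nonneg (zero_le_two (α := ℝ)) zero_le_two s
  norm_num at h
  rw [sq, ← h]

theorem tendsto_residue_of_two_cpow_neg_eq {ω x : ℂ} (hx : (2 : ℂ) ^ (-ω) = x)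
    (hroot : 1 - x - x ^ 2 = 0) :
    Tendsto (fun s : ℂ => (s - ω) * ((4 : ℂ) ^ (-s) / (1 - (2 : ℂ) ^ (-s) - (4 : ℂ) ^ (-s))))
      (𝓝[≠] ω) (𝓝 (x / (Complex.log 2 * (1 + 2 * x)))) := by
  have hx0 : x ≠ 0 := by rintro rfl; norm_num at hroot
  have h2x : 1 + 2 * x ≠ 0 := by
    intro h
    rw [show x = -1 / 2 by linear_combination h / 2] at hroot
    norm_num at hroot
  have hderiv : HasDerivAt (fun s : ℂ => (2 : ℂ) ^ (-s)) (-(x * Complex.log 2)) ω := by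
    simpa [hx] using (hasDerivAt_neg ω).const_cpow (c := 2) (Or.inl two_ne_zero)
  have hg : HasDerivAt (fun s : ℂ => 1 - (2 : ℂ) ^ (-s) - ((2 : ℂ) ^ (-s)) ^ 2)
      (x * Complex.log 2 * (1 + 2 * x)) ω := by
    refine (((hasDerivAt_const ω (1 : ℂ)).sub hderiv).sub (hderiv.pow 2)).congr_deriv ?_
    rw [hx]; ring
  have hlog : Complex.log 2 ≠ 0 := by
    rw [← ofNat_log]
    exact_mod_cast (Real.log_pos one_lt_two).ne'
  convert tendsto_sub_mul_div_of_hasDerivAt (f := fun s : ℂ => ((2 : ℂ) ^ (-s)) ^ 2)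
    (by fun_prop) hg (by rw [hx, hroot]) (by positivity) using 2
  · simp only [four_cpow_eq_two_cpow_sq]
  · rw [hx]; field_simp

theorem fibonacciString_residue (n : ℤ) :
    Tendsto
      (fun s : ℂ => (s - (Real.log ((1 + Real.sqrt 5) / 2) / Real.log 2 +
          (n : ℂ) * (2 * Real.pi / Real.log 2) * I)) *
        ((4 : ℂ) ^ (-s) / (1 - (2 : ℂ) ^ (-s) - (4 : ℂ) ^ (-s))))
      (nhdsWithin (Real.log ((1 + Real.sqrt 5) / 2) / Real.log 2 +
          (n : ℂ) * (2 * Real.pi / Real.log 2) * I)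
        {(Real.log ((1 + Real.sqrt 5) / 2) / Real.log 2 +
          (n : ℂ) * (2 * Real.pi / Real.log 2) * I : ℂ)}ᶜ)
      (nhds (((3 - (1 + Real.sqrt 5) / 2) / (5 * Real.log 2) : ℝ) : ℂ)) := by
  have hinv : φ⁻¹ = φ - 1 := by rw [Real.inv_goldenRatio, ← Real.one_sub_goldenConj]; ring
  have hpole : (2 : ℂ) ^ (-(Real.log φ / Real.log 2 + n * (2 * π / Real.log 2) * I : ℂ)) =
      (φ⁻¹ : ℝ) := by
    have h := ofReal_cpow_log_div_log_add_int_mul Real.goldenRatio_pos two_pos (by norm_num) n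
    simp only [ofReal_ofNat] at h
    rw [cpow_neg, h, ofReal_inv]
  have hroot : (1 : ℂ) - (φ⁻¹ : ℝ) - ((φ⁻¹ : ℝ) : ℂ) ^ 2 = 0 := by
    have : 1 - φ⁻¹ - φ⁻¹ ^ 2 = 0 := by rw [hinv]; linear_combination -Real.goldenRatio_sq
    exact_mod_cast this
  have hvalue : φ⁻¹ / (Real.log 2 * (1 + 2 * φ⁻¹)) = (3 - φ) / (5 * Real.log 2) := by
    have h2φ : 0 < 1 + 2 * (φ - 1) := by linarith [Real.one_lt_goldenRatio]
    rw [hinv, div_eq_div_iff (mul_pos (Real.log_pos one_lt_two) h2φ).ne' (by positivity)]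
    linear_combination 2 * Real.log 2 * Real.goldenRatio_sq
  convert tendsto_residue_of_two_cpow_neg_eq hpole hroot using 2
  rw [← hvalue, ← ofNat_log]
  norm_cast
end

section
/- Define V(ε) = (1/3)·(2/3)^{⌊log_3(1/ε)⌋} for ε ∈ (0,1). Then the limit of ε^{−(1−D)} V(ε) as ε → 0⁺ does not exist, where D = log 2/log 3; however, the logarithmic Cesàro average lim_{T→∞} (1/log T) ∫_{1/T}^1 ε^{−(1−D)} V(ε) dε/ε exists and equals 1/(6(log 3 − log 2)). -/
/-!
Write `ε = 3 ^ (-t)`. Then `ε ^ (D - 1) = (3/2) ^ t` while `V(ε) = (2/3) ^ ⌊t⌋ / 3`, so the scaled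
volume is `(3/2) ^ (fract t) / 3`: a nonconstant periodic function of `t`, which has no limit as
`t → ∞`. On each triadic interval `(3 ^ (-(k+1)), 3 ^ (-k)]` the volume is constant and the
integral of `ε ^ (D - 2)` against it is `1 / (6 (1 - D))`, independently of `k`. Hence
`∫_{3^(-s)}^1` grows like `s / (6 (1 - D))`, and dividing by `log T = s log 3` gives the average.
-/

open Filter

noncomputable def cantorTubeVolume (ε : ℝ) : ℝ :=
  (1 / 3) * (2 / 3 : ℝ) ^ ⌊Real.log (1 / ε) / Real.log 3⌋

open Topology Set Real MeasureTheory
open scoped Interval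

theorem tendsto_div_atTop_of_natFloor_mul_le {Φ : ℝ → ℝ} {c : ℝ}
    (h : ∀ᶠ s in atTop, ⌊s⌋₊ * c ≤ Φ s ∧ Φ s ≤ (⌊s⌋₊ + 1) * c) :
    Tendsto (fun s ↦ Φ s / s) atTop (𝓝 c) := by
  have lower : Tendsto (fun s : ℝ ↦ ⌊s⌋₊ * c / s) atTop (𝓝 c) := by
    simpa only [mul_div_right_comm, one_mul] using tendsto_nat_floor_div_atTop.mul_const c
  have upper : Tendsto (fun s : ℝ ↦ (⌊s⌋₊ + 1) * c / s) atTop (𝓝 c) := by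
    simpa only [add_mul, one_mul, add_div, add_zero, id] using
      lower.add (tendsto_const_nhds.div_atTop tendsto_id)
  refine tendsto_of_tendsto_of_tendsto_of_le_of_le' lower upper ?_ ?_ <;>
    filter_upwards [h, eventually_gt_atTop 0] with s hs hs0
  exacts [div_le_div_of_nonneg_right hs.1 hs0.le, div_le_div_of_nonneg_right hs.2 hs0.le]

namespace CantorString

noncomputable def dim : ℝ := log 2 / log 3

noncomputable def scaledVolume (ε : ℝ) : ℝ := ε ^ (-(1 - dim)) * cantorTubeVolume ε

lemma one_sub_dim_mul_log_three : (1 - dim) * log 3 = log 3 - log 2 := by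
  have : log 3 ≠ 0 := (log_pos (by norm_num)).ne'
  rw [dim]
  field_simp

lemma dim_lt_one : dim < 1 :=
  (div_lt_one (log_pos (by norm_num))).2 (log_lt_log (by norm_num) (by norm_num))

lemma three_rpow_one_sub_dim : (3 : ℝ) ^ (1 - dim) = 3 / 2 := by
  rw [rpow_def_of_pos (by norm_num), mul_comm, one_sub_dim_mul_log_three,
    ← log_div (by norm_num) (by norm_num), exp_log (by norm_num)]

lemma three_rpow_neg_rpow (t : ℝ) : ((3 : ℝ) ^ (-t)) ^ (-(1 - dim)) = (3 / 2) ^ t := by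
  rw [← rpow_mul (by norm_num), neg_mul_neg, mul_comm, rpow_mul (by norm_num),
    three_rpow_one_sub_dim]

lemma cantorTubeVolume_eq (ε : ℝ) :
    cantorTubeVolume ε = (1 / 3) * (2 / 3) ^ ⌊logb 3 ε⁻¹⌋ := by
  rw [cantorTubeVolume, one_div ε, logb]

lemma scaledVolume_three_rpow_neg (t : ℝ) :
    scaledVolume ((3 : ℝ) ^ (-t)) = (1 / 3) * (3 / 2) ^ Int.fract t := by
  rw [scaledVolume, three_rpow_neg_rpow, cantorTubeVolume_eq, ← rpow_neg (by norm_num), neg_neg,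
    logb_rpow (by norm_num) (by norm_num), Int.fract, rpow_sub (by norm_num), rpow_intCast,
    ← inv_div (2 : ℝ), inv_zpow, div_inv_eq_mul]
  ring

lemma tendsto_three_rpow_neg : Tendsto (fun t : ℝ ↦ (3 : ℝ) ^ (-t)) atTop (𝓝[>] 0) :=
  tendsto_nhdsWithin_iff.2
    ⟨(tendsto_rpow_atBot_of_base_gt_one 3 (by norm_num)).comp tendsto_neg_atTop_atBot,
      Eventually.of_forall fun _ ↦ rpow_pos_of_pos (by norm_num) _⟩

lemma not_tendsto_scaledVolume (L : ℝ) : ¬ Tendsto scaledVolume (𝓝[>] 0) (𝓝 L) := by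
  intro hL
  have limit_eq (a : ℝ) : L = (1 / 3) * (3 / 2) ^ Int.fract a := by
    have hseq := hL.comp (tendsto_three_rpow_neg.comp
      (tendsto_atTop_add_const_right atTop a tendsto_natCast_atTop_atTop))
    refine tendsto_nhds_unique hseq (tendsto_const_nhds.congr fun n ↦ ?_)
    simp only [Function.comp_apply, scaledVolume_three_rpow_neg, add_comm _ a,
      Int.fract_add_natCast]
  have h0 := limit_eq 0
  have hhalf := limit_eq (1 / 2)
  rw [Int.fract_zero, rpow_zero] at h0
  rw [Int.fract_eq_self.2 ⟨by norm_num, by norm_num⟩] at hhalf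
  have : (1 : ℝ) < (3 / 2) ^ (1 / 2 : ℝ) := one_lt_rpow (by norm_num) (by norm_num)
  linarith

lemma floor_logb_inv_eq {k : ℕ} {ε : ℝ}
    (hε : ε ∈ Ioc ((3 : ℝ) ^ (-((k : ℝ) + 1))) (3 ^ (-(k : ℝ)))) : ⌊logb 3 ε⁻¹⌋ = k := by
  have hε0 : 0 < ε := (rpow_pos_of_pos (by norm_num) _).trans hε.1
  rw [Int.floor_eq_iff, le_logb_iff_rpow_le (by norm_num) (inv_pos.2 hε0),
    logb_lt_iff_lt_rpow (by norm_num) (inv_pos.2 hε0), le_inv_comm₀ (by positivity) hε0,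
    inv_lt_comm₀ hε0 (by positivity), ← rpow_neg (by norm_num), ← rpow_neg (by norm_num)]
  push_cast
  exact ⟨hε.2, hε.1⟩

lemma scaledVolume_div_eqOn_triadicInterval (k : ℕ) :
    EqOn (fun ε ↦ scaledVolume ε / ε) (fun ε ↦ (1 / 3) * (2 / 3) ^ k * ε ^ (-(1 - dim) - 1))
      (Ι ((3 : ℝ) ^ (-((k : ℝ) + 1))) (3 ^ (-(k : ℝ)))) := by
  intro ε hε
  rw [uIoc_of_le (rpow_le_rpow_of_exponent_le (by norm_num) (by linarith))] at hε
  have hε0 : 0 < ε := (rpow_pos_of_pos (by norm_num) _).trans hε.1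
  simp only
  rw [rpow_sub_one hε0.ne', scaledVolume, cantorTubeVolume_eq, floor_logb_inv_eq hε, zpow_natCast]
  ring

lemma integral_triadicInterval (k : ℕ) :
    ∫ ε in (3 : ℝ) ^ (-((k : ℝ) + 1))..3 ^ (-(k : ℝ)), scaledVolume ε / ε = (6 * (1 - dim))⁻¹ := by
  have h0 : (0 : ℝ) ∉ [[(3 : ℝ) ^ (-((k : ℝ) + 1)), 3 ^ (-(k : ℝ))]] :=
    notMem_uIcc_of_lt (rpow_pos_of_pos (by norm_num) _) (rpow_pos_of_pos (by norm_num) _)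
  have hexp : -(1 - dim) - 1 ≠ -1 := by linarith [dim_lt_one]
  have hpow : (2 / 3 : ℝ) ^ k * (3 / 2) ^ k = 1 := by rw [← mul_pow]; norm_num
  rw [intervalIntegral.integral_congr_ae
      (Eventually.of_forall fun ε hε ↦ scaledVolume_div_eqOn_triadicInterval k hε),
    intervalIntegral.integral_const_mul, integral_rpow (Or.inr ⟨hexp, h0⟩), sub_add_cancel,
    three_rpow_neg_rpow, three_rpow_neg_rpow, rpow_add_one (by norm_num), rpow_natCast]
  have : 1 - dim ≠ 0 := by linarith [dim_lt_one]
  calc 1 / 3 * (2 / 3) ^ k * (((3 / 2) ^ k - (3 / 2) ^ k * (3 / 2)) / -(1 - dim))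
      = (2 / 3 : ℝ) ^ k * (3 / 2) ^ k / (6 * (1 - dim)) := by field_simp; ring
    _ = (6 * (1 - dim))⁻¹ := by rw [hpow, one_div]

lemma intervalIntegrable_triadicInterval (k : ℕ) :
    IntervalIntegrable (fun ε ↦ scaledVolume ε / ε) volume
      ((3 : ℝ) ^ (-((k : ℝ) + 1))) (3 ^ (-(k : ℝ))) :=
  (intervalIntegrable_congr (scaledVolume_div_eqOn_triadicInterval k)).2 <|
    (intervalIntegral.intervalIntegrable_rpow
      (Or.inr (notMem_uIcc_of_lt (by positivity) (by positivity)))).const_mul _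

lemma intervalIntegrable_three_rpow_neg_natCast (n : ℕ) :
    IntervalIntegrable (fun ε ↦ scaledVolume ε / ε) volume
      ((3 : ℝ) ^ (-(n : ℝ))) 1 := by
  have := IntervalIntegrable.trans_iterate (a := fun k : ℕ ↦ (3 : ℝ) ^ (-(k : ℝ))) (n := n)
    fun k _ ↦ by simpa only [Nat.cast_succ] using (intervalIntegrable_triadicInterval k).symm
  simpa using this.symm

lemma intervalIntegrable_three_rpow_neg {t : ℝ} (ht : 0 ≤ t) :
    IntervalIntegrable (fun ε ↦ scaledVolume ε / ε) volume ((3 : ℝ) ^ (-t)) 1 := by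
  refine (intervalIntegrable_three_rpow_neg_natCast ⌈t⌉₊).mono_set (uIcc_subset_uIcc_right ?_)
  have hceil : (3 : ℝ) ^ (-(⌈t⌉₊ : ℝ)) ≤ 3 ^ (-t) :=
    rpow_le_rpow_of_exponent_le (by norm_num) (neg_le_neg (Nat.le_ceil t))
  have hle_one : (3 : ℝ) ^ (-t) ≤ 1 := rpow_le_one_of_one_le_of_nonpos (by norm_num) (by linarith)
  rw [uIcc_of_le (hceil.trans hle_one)]
  exact ⟨hceil, hle_one⟩

lemma integral_three_rpow_neg_natCast (n : ℕ) :
    ∫ ε in (3 : ℝ) ^ (-(n : ℝ))..1, scaledVolume ε / ε = n * (6 * (1 - dim))⁻¹ := by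
  induction n with
  | zero => simp
  | succ n ih =>
    push_cast
    rw [← intervalIntegral.integral_add_adjacent_intervals (intervalIntegrable_triadicInterval n)
      (intervalIntegrable_three_rpow_neg_natCast n), integral_triadicInterval, ih]
    ring

lemma scaledVolume_div_nonneg {ε : ℝ} (hε : 0 < ε) : 0 ≤ scaledVolume ε / ε := by
  rw [scaledVolume, cantorTubeVolume]
  positivity

lemma integral_three_rpow_neg_mono {s t : ℝ} (hs : 0 ≤ s) (hst : s ≤ t) :
    ∫ ε in (3 : ℝ) ^ (-s)..1, scaledVolume ε / ε ≤ ∫ ε in (3 : ℝ) ^ (-t)..1, scaledVolume ε / ε :=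
  intervalIntegral.integral_mono_interval
    (rpow_le_rpow_of_exponent_le (by norm_num) (neg_le_neg hst))
    (rpow_le_one_of_one_le_of_nonpos (by norm_num) (by linarith)) le_rfl
    (ae_restrict_of_forall_mem measurableSet_Ioc fun ε hε ↦
      scaledVolume_div_nonneg ((rpow_pos_of_pos (by norm_num) _).trans hε.1))
    (intervalIntegrable_three_rpow_neg (hs.trans hst))

lemma tendsto_integral_three_rpow_neg_div :
    Tendsto (fun s ↦ (∫ ε in (3 : ℝ) ^ (-s)..1, scaledVolume ε / ε) / s) atTop
      (𝓝 (6 * (1 - dim))⁻¹) := by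
  refine tendsto_div_atTop_of_natFloor_mul_le ?_
  filter_upwards [eventually_ge_atTop 0] with s hs
  have hlower := integral_three_rpow_neg_mono (Nat.cast_nonneg _) (Nat.floor_le hs)
  have hupper := integral_three_rpow_neg_mono hs (Nat.lt_floor_add_one s).le
  rw [← Nat.cast_add_one, integral_three_rpow_neg_natCast] at hupper
  rw [integral_three_rpow_neg_natCast] at hlower
  push_cast at hupper
  exact ⟨hlower, hupper⟩

lemma tendsto_average_scaledVolume :
    Tendsto (fun T ↦ (1 / log T) * ∫ ε in (1 / T)..1, scaledVolume ε / ε) atTop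
      (𝓝 (1 / (6 * (log 3 - log 2)))) := by
  have hlim := (tendsto_integral_three_rpow_neg_div.div_const (log 3)).comp
    (tendsto_logb_atTop (b := 3) (by norm_num))
  rw [div_eq_mul_inv, ← mul_inv, mul_assoc, one_sub_dim_mul_log_three, ← one_div] at hlim
  refine hlim.congr' ?_
  filter_upwards [eventually_gt_atTop 0] with T hT
  rw [Function.comp_apply, rpow_neg (by norm_num), rpow_logb (by norm_num) (by norm_num) hT,
    logb, ← one_div]
  field_simp

end CantorString

theorem cantorString_not_measurable_average_content :
    (¬ ∃ L : ℝ, Tendsto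
        (fun ε : ℝ => ε ^ (-(1 - Real.log 2 / Real.log 3)) * cantorTubeVolume ε)
        (nhdsWithin 0 (Set.Ioi 0)) (nhds L)) ∧
    Tendsto (fun T : ℝ => (1 / Real.log T) *
        ∫ ε in (1 / T : ℝ)..1,
          ε ^ (-(1 - Real.log 2 / Real.log 3)) * cantorTubeVolume ε / ε)
      atTop (nhds (1 / (6 * (Real.log 3 - Real.log 2)))) :=
  ⟨fun ⟨L, hL⟩ ↦ CantorString.not_tendsto_scaledVolume L hL,
    CantorString.tendsto_average_scaledVolume⟩
end
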